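/- The function x(t) = v⋆ h₀ e^{ct} / √(h₀² e^{2ct} + 1) with v⋆, h₀, c > 0 satisfies the differential equation x' = (c/v⋆²)(v⋆² − x²)x for all t ∈ ℝ. -/

import Mathlib

/-- The claimed black-start trajectory satisfies the magnitude ODE. -/
theorem stmt5 (vs h₀ c : ℝ) (hvs : 0 < vs) (hh₀ : 0 < h₀) (hc : 0 < c)
    (x : ℝ → ℝ)
    (hx : ∀ t, x t = vs * h₀ * Real.exp (c * t) /
        Real.sqrt (h₀ ^ 2 * Real.exp (2 * c * t) + 1)) :
    ∀ t : ℝ, HasDerivAt x ((c / vs ^ 2) * (vs ^ 2 - (x t) ^ 2) * x t) t := by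
  have hxe : x = fun t => vs * h₀ * Real.exp (c * t) /
      Real.sqrt (h₀ ^ 2 * Real.exp (2 * c * t) + 1) := funext hx
  subst hxe
  intro t
  have hu : 0 < h₀ ^ 2 * Real.exp (2 * c * t) + 1 := by positivity
  have hsne : Real.sqrt (h₀ ^ 2 * Real.exp (2 * c * t) + 1) ≠ 0 := by positivity
  have hspos : 0 < Real.sqrt (h₀ ^ 2 * Real.exp (2 * c * t) + 1) := Real.sqrt_pos.mpr hu
  have hsq : Real.sqrt (h₀ ^ 2 * Real.exp (2 * c * t) + 1) ^ 2
      = h₀ ^ 2 * Real.exp (2 * c * t) + 1 := Real.sq_sqrt hu.le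
  -- derivative of numerator
  have hf : HasDerivAt (fun s => vs * h₀ * Real.exp (c * s))
      (vs * h₀ * (Real.exp (c * t) * c)) t := by
    have := (((hasDerivAt_id t).const_mul c).exp).const_mul (vs * h₀)
    simpa using this
  -- derivative of inner of sqrt
  have hg0 : HasDerivAt (fun s => h₀ ^ 2 * Real.exp (2 * c * s) + 1)
      (h₀ ^ 2 * (Real.exp (2 * c * t) * (2 * c))) t := by
    have := ((((hasDerivAt_id t).const_mul (2 * c)).exp).const_mul (h₀ ^ 2)).add_const 1
    simpa using this
  have hg : HasDerivAt (fun s => Real.sqrt (h₀ ^ 2 * Real.exp (2 * c * s) + 1))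
      (h₀ ^ 2 * (Real.exp (2 * c * t) * (2 * c)) /
        (2 * Real.sqrt (h₀ ^ 2 * Real.exp (2 * c * t) + 1))) t :=
    hg0.sqrt (ne_of_gt hu)
  have hder := hf.div hg hsne
  refine hder.congr_deriv ?_
  symm
  set s := Real.sqrt (h₀ ^ 2 * Real.exp (2 * c * t) + 1) with hs
  have hexp2 : Real.exp (2 * c * t) = Real.exp (c * t) ^ 2 := by
    rw [← Real.exp_nat_mul]; ring_nf
  field_simp
  have h2 : c * t * 2 = 2 * c * t := by ring
  rw [h2, ← hs, hsq, hexp2]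
  ring
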